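/- Let (R, M) be a commutative Noetherian local ring. If the maximal ideal M is an internal direct sum of n cyclic R-modules, M = ⊕_{i=1}^n Rw_i, then every prime ideal of R is a direct sum of at most n cyclic R-modules. -/

import Mathlib

/-!
Distinct generators of a direct sum of principal ideals multiply to zero, since `w i * w j` lies
in both `Rw i` and `Rw j`. Hence a prime `P` either contains every `w i`, and then `P = M`, or
it misses exactly one generator `t` and contains all the others, which span an ideal `N` with
`M = Rt ⊕ N` and `N t = 0`. In the second case `P ∩ Rt = 0` by Nakayama: if `at ∈ P`, then
`a ∈ M`, so `at = rt²` for some `r`, and `rt ∈ P ∩ Rt` because `t ∉ P`; thus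
`P ∩ Rt = M (P ∩ Rt)`. By the modular law `P = N ⊔ (P ∩ Rt) = N`.
-/

open IsLocalRing

theorem mul_eq_zero_of_iSupIndep_span_singleton {R ι : Type*} [CommSemiring R] {w : ι → R}
    (hw : iSupIndep fun i => Ideal.span {w i}) {i j : ι} (hij : i ≠ j) : w i * w j = 0 :=
  (Submodule.disjoint_def.mp (hw.pairwiseDisjoint hij)) _
    (Ideal.mul_mem_right _ _ (Ideal.mem_span_singleton_self _))
    (Ideal.mul_mem_left _ _ (Ideal.mem_span_singleton_self _))

theorem Ideal.iSup_span_singleton_update_zero {R ι : Type*} [CommSemiring R] [DecidableEq ι]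
    (w : ι → R) (i₀ : ι) :
    ⨆ i, Ideal.span {Function.update w i₀ 0 i} =
      ⨆ i, ⨆ (_ : i ≠ i₀), Ideal.span {w i} :=
  iSup_congr fun i => by by_cases h : i = i₀ <;> simp [h]

namespace Ideal.IsPrime

variable {R : Type*} [CommRing R] [IsLocalRing R] [IsNoetherianRing R] {P N : Ideal R} {t : R}

theorem inf_span_singleton_eq_bot (hP : P.IsPrime) (ht : t ∉ P)
    (hM : Ideal.span {t} ⊔ N = maximalIdeal R) (hN : N ≤ (Ideal.span {t}).annihilator) :
    P ⊓ Ideal.span {t} = ⊥ := by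
  have htM : t ∈ maximalIdeal R := hM ▸ Ideal.mem_sup_left (Ideal.mem_span_singleton_self t)
  refine Submodule.eq_bot_of_le_smul_of_le_jacobson_bot (maximalIdeal R) _
    (IsNoetherian.noetherian _) ?_ (maximalIdeal_le_jacobson ⊥)
  rintro x ⟨hxP, hxt⟩
  obtain ⟨a, rfl⟩ := Ideal.mem_span_singleton'.mp hxt
  have haM : a ∈ maximalIdeal R :=
    (mem_maximalIdeal a).mpr fun ha => ht ((Ideal.unit_mul_mem_iff_mem P ha).mp hxP)
  rw [← hM] at haM
  obtain ⟨_, hy, z, hz, rfl⟩ := Submodule.mem_sup.mp haM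
  obtain ⟨r, rfl⟩ := Ideal.mem_span_singleton'.mp hy
  have hzt : z * t = 0 := (Submodule.mem_annihilator_span_singleton t z).mp (hN hz)
  have hx : (r * t + z) * t = r * t * t := by rw [add_mul, hzt, add_zero]
  have hrtP : r * t ∈ P := (hP.mem_or_mem (hx ▸ hxP)).resolve_right ht
  rw [hx, mul_comm, ← smul_eq_mul]
  exact Submodule.smul_mem_smul htM
    ⟨hrtP, Ideal.mul_mem_left _ _ (Ideal.mem_span_singleton_self t)⟩

theorem eq_of_sup_span_singleton_eq_maximalIdeal (hP : P.IsPrime) (ht : t ∉ P)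
    (hM : Ideal.span {t} ⊔ N = maximalIdeal R) (hN : N ≤ (Ideal.span {t}).annihilator) :
    P = N := by
  have hNP : N ≤ P := fun z hz => by
    have hzt : z * t = 0 := (Submodule.mem_annihilator_span_singleton t z).mp (hN hz)
    exact (hP.mem_or_mem (hzt ▸ P.zero_mem)).resolve_right ht
  calc P = (N ⊔ Ideal.span {t}) ⊓ P := by
        rw [sup_comm, hM, inf_eq_right.mpr (le_maximalIdeal hP.ne_top)]
    _ = N ⊔ P ⊓ Ideal.span {t} := by rw [sup_inf_assoc_of_le _ hNP, inf_comm]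
    _ = N := by rw [hP.inf_span_singleton_eq_bot ht hM hN, sup_bot_eq]

end Ideal.IsPrime

theorem primes_direct_sum_of_at_most_n_cyclics_of_noetherian_local_general
    {R : Type} [CommRing R] [IsLocalRing R] [IsNoetherianRing R]
    {n : ℕ} (w : Fin n → R)
    (hindep : iSupIndep (fun i => Ideal.span {w i}))
    (hsup : (⨆ i, Ideal.span {w i}) = IsLocalRing.maximalIdeal R)
    (P : Ideal R) (hP : P.IsPrime) :
    ∃ (m : ℕ) (_ : m ≤ n) (v : Fin m → R), (∀ j, v j ∈ P) ∧
      iSupIndep (fun j => Ideal.span {v j}) ∧ (⨆ j, Ideal.span {v j}) = P := by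
  suffices ∃ v : Fin n → R,
      iSupIndep (fun j => Ideal.span {v j}) ∧ (⨆ j, Ideal.span {v j}) = P by
    obtain ⟨v, hv, hvP⟩ := this
    exact ⟨n, le_rfl, v,
      fun j => hvP ▸ Submodule.mem_iSup_of_mem j (Ideal.mem_span_singleton_self _), hv, hvP⟩
  obtain hall | ⟨i₀, ht⟩ := Classical.forall_or_exists_not (w · ∈ P)
  · refine ⟨w, hindep, le_antisymm ?_ (hsup ▸ le_maximalIdeal hP.ne_top)⟩
    exact iSup_le fun i => (Ideal.span_singleton_le_iff_mem P).mpr (hall i)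
  · refine ⟨Function.update w i₀ 0, hindep.mono fun i => ?_, ?_⟩
    · by_cases h : i = i₀ <;> simp [h]
    · rw [Ideal.iSup_span_singleton_update_zero]
      refine (hP.eq_of_sup_span_singleton_eq_maximalIdeal ht ?_ ?_).symm
      · exact (iSup_split_single (fun i => Ideal.span {w i}) i₀).symm.trans hsup
      · exact iSup₂_le fun i hi => (Ideal.span_singleton_le_iff_mem _).mpr <|
          (Submodule.mem_annihilator_span_singleton _ _).mpr
            (mul_eq_zero_of_iSupIndep_span_singleton hindep hi)

theorem primes_direct_sum_of_at_most_n_cyclics_of_noetherian_local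
    {R : Type} [CommRing R] [IsLocalRing R] [IsNoetherianRing R]
    {n : ℕ} (w : Fin n → R)
    (hmem : ∀ i, w i ∈ IsLocalRing.maximalIdeal R)
    (hindep : iSupIndep (fun i => Ideal.span {w i}))
    (hsup : (⨆ i, Ideal.span {w i}) = IsLocalRing.maximalIdeal R)
    (P : Ideal R) (hP : P.IsPrime) :
    ∃ (m : ℕ) (_ : m ≤ n) (v : Fin m → R), (∀ j, v j ∈ P) ∧
      iSupIndep (fun j => Ideal.span {v j}) ∧ (⨆ j, Ideal.span {v j}) = P :=
  primes_direct_sum_of_at_most_n_cyclics_of_noetherian_local_general w hindep hsup P hP
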